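/- arXiv:1310.5402 — 5 statements merged into one kernel-verified Lean document; each statement's English description precedes it below -/
import Mathlib

section
/- Let k be a field of characteristic ≠ 2 containing an element i with i² = −1, and let F = k(u,v) be the fraction field of the polynomial ring in two variables over k, with u, v the images of the two variables. Consider the ternary quadratic forms over F: Q₁(S,T,R) = v(v²−1)·S² − u(u²−1)·T² + uv(u²−v²)·R² and Q₂(S,T,R) = S² − u·T² − v·R². Then there exists a nonzero λ ∈ F such that Q₁ is equivalent (isometric) to the scaled form λ·Q₂. Consequently the projective conics Q₁ = 0 and Q₂ = 0 in ℙ²_F are isomorphic over F, i.e., the two conic fibrations over the affine plane 𝔸²_{u,v} are birationally equivalent over the plane. -/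
open MvPolynomial

/-- The rational function field `k(u,v)`, as the fraction field of `k[u,v]`. -/
noncomputable abbrev RatFuncTwo (k : Type*) [Field k] : Type _ :=
  FractionRing (MvPolynomial (Fin 2) k)

/-- The image of the variable `u` in `k(u,v)`. -/
noncomputable def uVar (k : Type*) [Field k] : RatFuncTwo k :=
  algebraMap (MvPolynomial (Fin 2) k) _ (X 0)

/-- The image of the variable `v` in `k(u,v)`. -/
noncomputable def vVar (k : Type*) [Field k] : RatFuncTwo k :=
  algebraMap (MvPolynomial (Fin 2) k) _ (X 1)

/-- The explicit change-of-basis matrix witnessing the similarity of the two conics. -/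
private noncomputable def Mmat {F : Type*} [Field F] (u v I : F) : Matrix (Fin 3) (Fin 3) F :=
  !![u*v + u*v*I - u^2 - u^2*I, -(u*v) - u^2*I - u^2*v*I - u^3, u*v - u*v*I + u^2*v - u^2*v*I;
     -v^2 + v^2*I + u*v - u*v*I, u*v + u*v*I + u*v^2 + u*v^2*I, v^2*I - v^3 - u*v + u*v^2*I;
     -I + v - u + u*v*I, -u - u*I - u*v - u*v*I, v - v*I + u*v - u*v*I]

private theorem Mmat_det {F : Type*} [Field F] (u v I : F) (hI : I ^ 2 = -1) :
    (Mmat u v I).det = u * v * (u ^ 2 - 1) * (v ^ 2 - 1) * (u ^ 2 - v ^ 2) := by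
  simp only [Mmat, Matrix.det_fin_three, Matrix.cons_val', Matrix.cons_val_zero,
    Matrix.cons_val_one, Matrix.head_cons, Matrix.empty_val', Matrix.cons_val_fin_one,
    Matrix.cons_val_two, Matrix.tail_cons, Matrix.head_fin_const, Matrix.of_apply]
  linear_combination ((1:F)*u*v^3 + (-1:F)*u*v^4 + (3:F)*u^2*v^3 + (-2:F)*u^2*v^4 + (-1:F)*u^2*v^5 + (-1:F)*u^3*v + (-3:F)*u^3*v^2 + (3:F)*u^3*v^4 + (1:F)*u^3*v^5 + (1:F)*u^4*v + (2:F)*u^4*v^2 + (-3:F)*u^4*v^3 + (1:F)*u^5*v^2 + (-1:F)*u^5*v^3) * hI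

private theorem aux_similar {F : Type*} [Field F] (u v I : F) (hI : I ^ 2 = -1)
    (hlam : u * v * (u ^ 2 - 1) * (v ^ 2 - 1) * (u ^ 2 - v ^ 2) ≠ 0) :
    (QuadraticMap.weightedSumSquares F
        ![v * (v ^ 2 - 1), -(u * (u ^ 2 - 1)), u * v * (u ^ 2 - v ^ 2)]).Equivalent
      ((-(u * v * (u ^ 2 - 1) * (v ^ 2 - 1) * (u ^ 2 - v ^ 2))) •
        QuadraticMap.weightedSumSquares F ![1, -u, -v]) := by
  have hdet : IsUnit (Mmat u v I).det := by
    rw [Mmat_det u v I hI]; exact isUnit_iff_ne_zero.mpr hlam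
  haveI hinv : Invertible (Mmat u v I) := (Mmat u v I).invertibleOfIsUnitDet hdet
  refine ⟨QuadraticMap.IsometryEquiv.symm ⟨(Mmat u v I).toLinearEquiv' hinv, fun x => ?_⟩⟩
  show (QuadraticMap.weightedSumSquares F _) ((Mmat u v I).mulVec x) = _
  rw [QuadraticMap.coeFn_smul]
  simp only [QuadraticMap.weightedSumSquares_apply, Mmat, Matrix.mulVec, dotProduct,
    Fin.sum_univ_three, Matrix.cons_val', Matrix.cons_val_zero, Matrix.cons_val_one,
    Matrix.head_cons, Matrix.empty_val', Matrix.cons_val_fin_one, Matrix.cons_val_two,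
    Matrix.tail_cons, Matrix.head_fin_const, Matrix.of_apply, Pi.smul_apply, smul_eq_mul]
  linear_combination (((-1:F)*u*v^3 + (1:F)*u*v^4 + (-3:F)*u^2*v^3 + (2:F)*u^2*v^4 + (1:F)*u^2*v^5 + (1:F)*u^3*v + (3:F)*u^3*v^2 + (-3:F)*u^3*v^4 + (-1:F)*u^3*v^5 + (-1:F)*u^4*v + (-2:F)*u^4*v^2 + (3:F)*u^4*v^3 + (-1:F)*u^5*v^2 + (1:F)*u^5*v^3) * (x 0 * x 0)
      + ((1:F)*u^3*v^2 + (1:F)*u^3*v^3 + (-1:F)*u^3*v^4 + (-1:F)*u^3*v^5 + (-1:F)*u^4*v + (-2:F)*u^4*v^2 + (2:F)*u^4*v^4 + (1:F)*u^4*v^5 + (1:F)*u^5*v + (1:F)*u^5*v^2 + (-1:F)*u^5*v^3 + (-1:F)*u^5*v^4) * (x 1 * x 1)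
      + ((1:F)*u*v^4 + (-1:F)*u*v^5 + (-1:F)*u^2*v^3 + (2:F)*u^2*v^4 + (-1:F)*u^2*v^5 + (-1:F)*u^3*v^3 + (1:F)*u^3*v^5 + (1:F)*u^4*v^3 + (-2:F)*u^4*v^4 + (1:F)*u^4*v^5 + (1:F)*u^5*v^3 + (-1:F)*u^5*v^4) * (x 2 * x 2)
      + (2:F) * ((1:F)*u^2*v^3 + (-1:F)*u^2*v^5 + (-1:F)*u^3*v^2 + (1:F)*u^3*v^4 + (-1:F)*u^4*v^3 + (1:F)*u^4*v^5 + (1:F)*u^5*v^2 + (-1:F)*u^5*v^4) * (x 1 * x 2)) * hI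

/-- Let `k` be a field of characteristic `≠ 2` containing `i` with `i² = -1`, and let
`F = k(u,v)`. The ternary quadratic forms
`Q₁ = v(v²-1)·S² - u(u²-1)·T² + uv(u²-v²)·R²` and `Q₂ = S² - u·T² - v·R²` over `F`
are similar: there is a nonzero `λ ∈ F` with `Q₁` equivalent (isometric) to `λ·Q₂`.
Hence the corresponding projective conics in `ℙ²_F` are isomorphic over `F`, i.e. the two
conic fibrations over `𝔸²_{u,v}` are birationally equivalent over the plane. -/
theorem conic_forms_similar (k : Type*) [Field k] (h2 : (2 : k) ≠ 0)
    (i : k) (hi : i ^ 2 = -1) :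
    ∃ lam : RatFuncTwo k, lam ≠ 0 ∧
      (QuadraticMap.weightedSumSquares (RatFuncTwo k)
        ![vVar k * ((vVar k) ^ 2 - 1),
          -(uVar k * ((uVar k) ^ 2 - 1)),
          uVar k * vVar k * ((uVar k) ^ 2 - (vVar k) ^ 2)]).Equivalent
      (lam • QuadraticMap.weightedSumSquares (RatFuncTwo k)
        ![1, -(uVar k), -(vVar k)]) := by
  have inj := IsFractionRing.injective (MvPolynomial (Fin 2) k) (RatFuncTwo k)
  set I : RatFuncTwo k := algebraMap (MvPolynomial (Fin 2) k) _ (MvPolynomial.C i) with hIdef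
  have hI : I ^ 2 = -1 := by
    rw [hIdef, ← map_pow, ← map_pow, hi, map_neg, map_one, map_neg, map_one]
  have hrepr : uVar k * vVar k * ((uVar k) ^ 2 - 1) * ((vVar k) ^ 2 - 1)
      * ((uVar k) ^ 2 - (vVar k) ^ 2)
      = algebraMap (MvPolynomial (Fin 2) k) (RatFuncTwo k)
        (X 0 * X 1 * ((X 0 : MvPolynomial (Fin 2) k) ^ 2 - 1) * ((X 1) ^ 2 - 1)
          * ((X 0) ^ 2 - (X 1) ^ 2)) := by
    simp [uVar, vVar, map_mul, map_sub, map_pow]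
  have hX0 : (X 0 : MvPolynomial (Fin 2) k) ≠ 0 := MvPolynomial.X_ne_zero 0
  have hX1 : (X 1 : MvPolynomial (Fin 2) k) ≠ 0 := MvPolynomial.X_ne_zero 1
  have h3 : ((X 0 : MvPolynomial (Fin 2) k) ^ 2 - 1) ≠ 0 := by
    intro h
    have := congrArg (eval (fun _ => (0 : k))) h
    simp at this
  have h4 : ((X 1 : MvPolynomial (Fin 2) k) ^ 2 - 1) ≠ 0 := by
    intro h
    have := congrArg (eval (fun _ => (0 : k))) h
    simp at this
  have h5 : ((X 0 : MvPolynomial (Fin 2) k) ^ 2 - (X 1) ^ 2) ≠ 0 := by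
    intro h
    have := congrArg (eval (fun j : Fin 2 => if j = 0 then (1 : k) else 0)) h
    simp at this
  have hlam : uVar k * vVar k * ((uVar k) ^ 2 - 1) * ((vVar k) ^ 2 - 1)
      * ((uVar k) ^ 2 - (vVar k) ^ 2) ≠ 0 := by
    rw [hrepr]
    exact (map_ne_zero_iff _ inj).mpr
      (mul_ne_zero (mul_ne_zero (mul_ne_zero (mul_ne_zero hX0 hX1) h3) h4) h5)
  exact ⟨-(uVar k * vVar k * ((uVar k) ^ 2 - 1) * ((vVar k) ^ 2 - 1)
      * ((uVar k) ^ 2 - (vVar k) ^ 2)), neg_ne_zero.mpr hlam,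
    aux_similar (uVar k) (vVar k) I hI hlam⟩
end

section
/- Let F be a field of characteristic ≠ 2 and let a, b, a', b' ∈ F be nonzero. The following are equivalent: (i) the quaternion algebras ℍ[F, a, b] and ℍ[F, a', b'] are isomorphic as F-algebras (i.e., (a,b) = (a',b') in Br(F)); (ii) the ternary quadratic forms X² − aY² − bT² and X² − a'Y² − b'T² are similar, i.e., there exists a nonzero λ ∈ F such that X² − aY² − bT² is equivalent (isometric) to λ·(X² − a'Y² − b'T²); equivalently, the projective conics C_{a,b}: X² − aY² − bT² = 0 and C_{a',b'}: X² − a'Y² − b'T² = 0 in ℙ²_F are isomorphic over F. -/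
open scoped Quaternion
open QuadraticMap


namespace WittAux

variable {F : Type*} [Field F]

/-- scaling both sides of an equivalence -/
theorem equiv_smul {M₁ M₂ : Type*} [AddCommGroup M₁] [AddCommGroup M₂] [Module F M₁]
    [Module F M₂] {Q₁ : QuadraticForm F M₁} {Q₂ : QuadraticForm F M₂} (k : F)
    (h : Q₁.Equivalent Q₂) : (k • Q₁).Equivalent (k • Q₂) := by
  obtain ⟨e⟩ := h
  exact ⟨{ e.toLinearEquiv with
    map_app' := fun m => by
      have := e.map_app m
      show k • Q₂ (e m) = k • Q₁ m
      rw [this] }⟩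

theorem sq_smul_equiv {M : Type*} [AddCommGroup M] [Module F M] (Q : QuadraticForm F M)
    {u : F} (hu : u ≠ 0) : ((u * u) • Q).Equivalent Q := by
  refine ⟨{ LinearEquiv.smulOfNeZero F M u hu with map_app' := fun m => ?_ }⟩
  show Q (u • m) = ((u*u) • Q) m
  rw [QuadraticMap.map_smul]
  simp [smul_eq_mul]

theorem smul_wss {n : ℕ} (k : F) (w : Fin n → F) :
    k • weightedSumSquares F w = weightedSumSquares F (fun i => k * w i) := by
  ext v
  simp only [QuadraticMap.smul_apply, weightedSumSquares_apply, smul_eq_mul, Finset.mul_sum]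
  exact Finset.sum_congr rfl fun i _ => by ring

theorem wss_perm_scale {n : ℕ} (w : Fin n → F) (σ : Equiv.Perm (Fin n)) (d : Fin n → F)
    (hd : ∀ i, d i ≠ 0) :
    (weightedSumSquares F (fun i => w (σ i) * (d i * d i))).Equivalent
      (weightedSumSquares F w) := by
  refine ⟨{ (LinearEquiv.piCongrRight fun i : Fin n =>
      LinearEquiv.smulOfNeZero F F (d i) (hd i)).trans
      (LinearEquiv.piCongrLeft' F (fun _ : Fin n => F) σ) with map_app' := fun v => ?_ }⟩
  show weightedSumSquares F w (fun j => d (σ.symm j) • v (σ.symm j)) = _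
  simp only [weightedSumSquares_apply, smul_eq_mul]
  rw [← Equiv.sum_comp σ (fun j => w j * (d (σ.symm j) * v (σ.symm j) * (d (σ.symm j) * v (σ.symm j))))]
  exact Finset.sum_congr rfl fun i _ => by simp [Equiv.symm_apply_apply]; ring

/-- `⟨1,-a,-b⟩ ≃ (-(ab)⁻¹) • ⟨a,b,-ab⟩` -/
theorem base_equiv_pure (a b : F) (ha : a ≠ 0) (hb : b ≠ 0) :
    (weightedSumSquares F ![1, -a, -b]).Equivalent
      ((-(a*b)⁻¹) • weightedSumSquares F ![a, b, -(a*b)]) := by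
  rw [smul_wss]
  have h : ![(1:F), -a, -b] = fun i =>
      (fun j => -(a*b)⁻¹ * (![a, b, -(a*b)] : Fin 3 → F) j) ((Equiv.swap (0:Fin 3) 2) i)
        * ((![1, a, b] : Fin 3 → F) i * ![1, a, b] i) := by
    funext i
    fin_cases i <;> simp [Equiv.swap_apply_def] <;> field_simp <;> ring
  rw [h]
  exact wss_perm_scale (fun j => -(a*b)⁻¹ * (![a, b, -(a*b)] : Fin 3 → F) j) (Equiv.swap 0 2)
    ![1, a, b] (by intro i; fin_cases i <;> simp [ha, hb])

end WittAux

namespace WittAux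
variable {F : Type*} [Field F]

theorem polar_wss {n : ℕ} (w v u : Fin n → F) :
    polar (weightedSumSquares F w) v u = ∑ i, 2 * w i * (v i * u i) := by
  simp only [QuadraticMap.polar, weightedSumSquares_apply, Pi.add_apply, smul_eq_mul,
    ← Finset.sum_sub_distrib]
  exact Finset.sum_congr rfl fun i _ => by ring

theorem wss_toMatrix' [Invertible (2 : F)] {n : ℕ} (w : Fin n → F) :
    QuadraticForm.toMatrix' (weightedSumSquares F w) = Matrix.diagonal w := by
  have key : (2:ℕ) • QuadraticForm.toMatrix' (weightedSumSquares F w) = (2:ℕ) • Matrix.diagonal w := by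
    rw [QuadraticForm.toMatrix', ← map_nsmul (LinearMap.toMatrix₂' F),
      QuadraticMap.two_nsmul_associated]
    ext i j
    rw [LinearMap.toMatrix₂'_apply]
    have hp := polar_wss w (Pi.single i (1:F)) (Pi.single j 1)
    rw [QuadraticMap.polarBilin_apply_apply, hp]
    rcases eq_or_ne i j with rfl | hij
    · rw [Matrix.smul_apply, Matrix.diagonal_apply_eq, Finset.sum_eq_single i]
      · simp
      · intro k _ hk
        simp [Pi.single_eq_of_ne (Ne.symm (Ne.symm hk))]
      · simp
    · rw [Matrix.smul_apply, Matrix.diagonal_apply_ne _ hij]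
      rw [Finset.sum_eq_zero, smul_zero]
      intro k _
      rcases eq_or_ne k i with rfl | hki
      · simp [Pi.single_eq_of_ne hij]
      · simp [Pi.single_eq_of_ne hki]
  have h2 : (2:F) ≠ 0 := Invertible.ne_zero 2
  ext i j
  have := congrFun (congrFun (congrArg (fun M => M) key) i) j
  simp only [Matrix.smul_apply, nsmul_eq_mul, Nat.cast_ofNat] at this
  exact mul_left_cancel₀ h2 this

theorem wss_discr [Invertible (2 : F)] {n : ℕ} (w : Fin n → F) :
    QuadraticForm.discr' (weightedSumSquares F w) = ∏ i, w i := by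
  rw [QuadraticForm.discr', wss_toMatrix', Matrix.det_diagonal]

theorem discr_of_equiv [Invertible (2 : F)] {n : ℕ} {Q Q' : QuadraticForm F (Fin n → F)}
    (h : Q.Equivalent Q') : ∃ t : F, t ≠ 0 ∧ Q.discr' = (t * t) * Q'.discr' := by
  obtain ⟨e⟩ := h
  have hQ : Q = Q'.comp e.toLinearEquiv.toLinearMap := by
    ext x
    show Q x = Q' (e x)
    rw [e.map_app]
  refine ⟨(LinearMap.toMatrix' e.toLinearEquiv.toLinearMap).det, ?_, ?_⟩
  · have hcomp : e.toLinearEquiv.toLinearMap.comp e.toLinearEquiv.symm.toLinearMap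
        = LinearMap.id := by ext x; simp
    have := congrArg (fun f => (LinearMap.toMatrix' f).det) hcomp
    simp only [LinearMap.toMatrix'_comp, Matrix.det_mul, LinearMap.toMatrix'_id,
      Matrix.det_one] at this
    exact left_ne_zero_of_mul_eq_one this
  · have := QuadraticForm.discr'_comp (Q := Q') e.toLinearEquiv.toLinearMap
    rw [← hQ] at this
    exact this

end WittAux


namespace WittAux

variable {F : Type*} [Field F]

/-- embedding of coordinates as a pure quaternion -/
def toPure (c₁ c₂ : F) : (Fin 3 → F) →ₗ[F] ℍ[F,c₁,c₂] where
  toFun v := ⟨0, v 0, v 1, v 2⟩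
  map_add' x y := by ext <;> simp
  map_smul' r x := by ext <;> simp

@[simp] lemma toPure_re (c₁ c₂ : F) (v : Fin 3 → F) : (toPure c₁ c₂ v).re = 0 := rfl
@[simp] lemma toPure_imI (c₁ c₂ : F) (v : Fin 3 → F) : (toPure c₁ c₂ v).imI = v 0 := rfl
@[simp] lemma toPure_imJ (c₁ c₂ : F) (v : Fin 3 → F) : (toPure c₁ c₂ v).imJ = v 1 := rfl
@[simp] lemma toPure_imK (c₁ c₂ : F) (v : Fin 3 → F) : (toPure c₁ c₂ v).imK = v 2 := rfl

/-- projection onto imaginary coordinates -/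
def fromPure (c₁ c₂ : F) : ℍ[F,c₁,c₂] →ₗ[F] (Fin 3 → F) where
  toFun x := ![x.imI, x.imJ, x.imK]
  map_add' x y := by funext i; fin_cases i <;> simp
  map_smul' r x := by funext i; fin_cases i <;> simp

@[simp] lemma fromPure_toPure (c₁ c₂ : F) (v : Fin 3 → F) :
    fromPure c₁ c₂ (toPure c₁ c₂ v) = v := by
  funext i; fin_cases i <;> rfl

lemma toPure_fromPure (c₁ c₂ : F) (x : ℍ[F,c₁,c₂]) (hx : x.re = 0) :
    toPure c₁ c₂ (fromPure c₁ c₂ x) = x := by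
  ext <;> simp [toPure, fromPure, hx]

/-- the square of a pure quaternion is the scalar given by the quadratic form
`⟨c₁, c₂, -c₁c₂⟩` -/
lemma toPure_sq (c₁ c₂ : F) (v : Fin 3 → F) :
    toPure c₁ c₂ v * toPure c₁ c₂ v
      = algebraMap F ℍ[F,c₁,c₂] (weightedSumSquares F ![c₁, c₂, -(c₁*c₂)] v) := by
  rw [QuaternionAlgebra.coe_algebraMap]
  ext <;> simp [QuaternionAlgebra.re_mul, QuaternionAlgebra.imI_mul,
    QuaternionAlgebra.imJ_mul, QuaternionAlgebra.imK_mul, weightedSumSquares_apply,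
    Fin.sum_univ_three, smul_eq_mul] <;> ring

/-- an algebra isomorphism preserves pure quaternions (characteristic ≠ 2) -/
lemma re_map_eq_zero {a b a' b' : F} (h2 : (2:F) ≠ 0) (φ : ℍ[F,a,b] ≃ₐ[F] ℍ[F,a',b'])
    (x : ℍ[F,a,b]) (hx : x.re = 0) : (φ x).re = 0 := by
  have hsq : φ x * φ x = algebraMap F ℍ[F,a',b']
      (weightedSumSquares F ![a, b, -(a*b)] (fromPure a b x)) := by
    rw [← map_mul]
    conv_lhs => rw [← toPure_fromPure a b x hx]
    rw [toPure_sq, AlgEquiv.commutes]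
  set y := φ x with hy
  have hI : 2 * y.re * y.imI = 0 := by
    have := congrArg QuaternionAlgebra.imI hsq
    rw [QuaternionAlgebra.coe_algebraMap] at this
    simp only [QuaternionAlgebra.imI_mul, QuaternionAlgebra.imI_coe] at this
    linear_combination this
  have hJ : 2 * y.re * y.imJ = 0 := by
    have := congrArg QuaternionAlgebra.imJ hsq
    rw [QuaternionAlgebra.coe_algebraMap] at this
    simp only [QuaternionAlgebra.imJ_mul, QuaternionAlgebra.imJ_coe] at this
    linear_combination this
  have hK : 2 * y.re * y.imK = 0 := by
    have := congrArg QuaternionAlgebra.imK hsq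
    rw [QuaternionAlgebra.coe_algebraMap] at this
    simp only [QuaternionAlgebra.imK_mul, QuaternionAlgebra.imK_coe] at this
    linear_combination this
  by_contra hre
  have h2r : 2 * y.re ≠ 0 := mul_ne_zero h2 hre
  have hIy : y.imI = 0 := by rcases mul_eq_zero.1 hI with h | h; exact absurd h h2r; exact h
  have hJy : y.imJ = 0 := by rcases mul_eq_zero.1 hJ with h | h; exact absurd h h2r; exact h
  have hKy : y.imK = 0 := by rcases mul_eq_zero.1 hK with h | h; exact absurd h h2r; exact h
  have hyc : y = algebraMap F ℍ[F,a',b'] y.re := by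
    rw [QuaternionAlgebra.coe_algebraMap]
    ext <;> simp [hIy, hJy, hKy]
  have hxc : x = algebraMap F ℍ[F,a,b] y.re := by
    have := congrArg φ.symm hyc
    rwa [AlgEquiv.symm_apply_apply, AlgEquiv.commutes] at this
  have : x.re = y.re := by rw [hxc, QuaternionAlgebra.coe_algebraMap]; rfl
  exact hre (by rw [← this, hx])

end WittAux

namespace WittAux
variable {F : Type*} [Field F]

lemma algebraMap_injective_quat (c₁ c₂ : F) :
    Function.Injective (algebraMap F ℍ[F,c₁,c₂]) := fun s t h => by
  have := congrArg QuaternionAlgebra.re h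
  rw [QuaternionAlgebra.coe_algebraMap] at this
  exact this

/-- an algebra isomorphism of quaternion algebras induces an isometry of the pure parts -/
theorem pure_equiv_of_iso {a b a' b' : F} (h2 : (2:F) ≠ 0)
    (φ : ℍ[F,a,b] ≃ₐ[F] ℍ[F,a',b']) :
    (weightedSumSquares F ![a, b, -(a*b)]).Equivalent
      (weightedSumSquares F ![a', b', -(a'*b')]) := by
  let f : (Fin 3 → F) →ₗ[F] (Fin 3 → F) :=
    (fromPure a' b') ∘ₗ φ.toLinearMap ∘ₗ (toPure a b)
  let g : (Fin 3 → F) →ₗ[F] (Fin 3 → F) :=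
    (fromPure a b) ∘ₗ φ.symm.toLinearMap ∘ₗ (toPure a' b')
  have hfp : ∀ v : Fin 3 → F, toPure a' b' (f v) = φ (toPure a b v) := by
    intro v
    show toPure a' b' (fromPure a' b' (φ (toPure a b v))) = _
    exact toPure_fromPure _ _ _ (re_map_eq_zero h2 φ _ (toPure_re a b v))
  have hgp : ∀ v : Fin 3 → F, toPure a b (g v) = φ.symm (toPure a' b' v) := by
    intro v
    show toPure a b (fromPure a b (φ.symm (toPure a' b' v))) = _
    exact toPure_fromPure _ _ _ (re_map_eq_zero h2 φ.symm _ (toPure_re a' b' v))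
  have hgf : ∀ v, g (f v) = v := by
    intro v
    have : toPure a b (g (f v)) = toPure a b v := by
      show toPure a b (fromPure a b (φ.symm (toPure a' b' (f v)))) = _
      rw [hfp v]
      rw [toPure_fromPure _ _ _ (by rw [AlgEquiv.symm_apply_apply]; exact toPure_re a b v)]
      rw [AlgEquiv.symm_apply_apply]
    have := congrArg (fromPure a b) this
    simpa using this
  have hfg : ∀ v, f (g v) = v := by
    intro v
    have : toPure a' b' (f (g v)) = toPure a' b' v := by
      show toPure a' b' (fromPure a' b' (φ (toPure a b (g v)))) = _
      rw [hgp v]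
      rw [toPure_fromPure _ _ _ (by rw [AlgEquiv.apply_symm_apply]; exact toPure_re a' b' v)]
      rw [AlgEquiv.apply_symm_apply]
    have := congrArg (fromPure a' b') this
    simpa using this
  refine ⟨{ (LinearEquiv.ofLinear f g (LinearMap.ext hfg) (LinearMap.ext hgf) :
        (Fin 3 → F) ≃ₗ[F] (Fin 3 → F))
      with map_app' := fun v => ?_ }⟩
  show weightedSumSquares F ![a', b', -(a'*b')] (f v) = weightedSumSquares F ![a, b, -(a*b)] v
  apply algebraMap_injective_quat a' b'
  rw [← toPure_sq a' b' (f v), hfp v, ← map_mul, toPure_sq a b v, AlgEquiv.commutes]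

end WittAux

namespace WittAux
variable {F : Type*} [Field F]

theorem iso_of_pure_equiv {a b a' b' : F} (h2 : (2:F) ≠ 0) (ha : a ≠ 0) (hb : b ≠ 0)
    (h : (weightedSumSquares F ![a, b, -(a*b)]).Equivalent
      (weightedSumSquares F ![a', b', -(a'*b')])) :
    Nonempty (ℍ[F, a, b] ≃ₐ[F] ℍ[F, a', b']) := by
  obtain ⟨e⟩ := h
  set u : ℍ[F,a',b'] := toPure a' b' (e (Pi.single 0 1)) with hu_def
  set v : ℍ[F,a',b'] := toPure a' b' (e (Pi.single 1 1)) with hv_def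
  have wss_single : ∀ (w : Fin 3 → F) (i : Fin 3),
      weightedSumSquares F w (Pi.single i (1:F)) = w i := by
    intro w i
    rw [weightedSumSquares_apply, Finset.sum_eq_single i]
    · simp
    · intro k _ hk; simp [Pi.single_eq_of_ne (Ne.symm (Ne.symm hk))]
    · simp
  have hsq : ∀ x : Fin 3 → F,
      toPure a' b' (e x) * toPure a' b' (e x)
        = algebraMap F ℍ[F,a',b'] (weightedSumSquares F ![a, b, -(a*b)] x) := by
    intro x
    rw [toPure_sq, e.map_app]
  have hu2 : u * u = algebraMap F ℍ[F,a',b'] a := by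
    rw [hu_def, hsq, wss_single]; norm_num
  have hv2 : v * v = algebraMap F ℍ[F,a',b'] b := by
    rw [hv_def, hsq, wss_single]; norm_num
  have hanti : u * v + v * u = 0 := by
    have hsum : (u + v) * (u + v) = algebraMap F ℍ[F,a',b'] (a + b) := by
      have : u + v = toPure a' b' (e (Pi.single 0 1 + Pi.single 1 1)) := by
        rw [map_add, map_add]
      rw [this, hsq]
      congr 1
      rw [weightedSumSquares_apply, Fin.sum_univ_three]
      simp [Pi.single_apply]
    have expand : (u + v) * (u + v) = u*u + (u*v + v*u) + v*v := by noncomm_ring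
    rw [expand, hu2, hv2, map_add] at hsum
    rw [show algebraMap F ℍ[F,a',b'] a + algebraMap F ℍ[F,a',b'] b
      = algebraMap F ℍ[F,a',b'] a + 0 + algebraMap F ℍ[F,a',b'] b by rw [add_zero]] at hsum
    exact add_left_cancel (add_right_cancel hsum)
  have hvu : v * u = -(u * v) := eq_neg_of_add_eq_zero_right hanti
  -- the quaternionic basis
  let B : QuaternionAlgebra.Basis ℍ[F,a',b'] a 0 b :=
    { i := u, j := v, k := u * v
      i_mul_i := by rw [hu2, Algebra.algebraMap_eq_smul_one, zero_smul, add_zero]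
      j_mul_j := by rw [hv2, Algebra.algebraMap_eq_smul_one]
      i_mul_j := rfl
      j_mul_i := by rw [hvu, zero_smul, zero_sub] }
  let Φ : ℍ[F,a,b] →ₐ[F] ℍ[F,a',b'] := B.liftHom
  -- auxiliary re computations
  have hure : u.re = 0 := toPure_re _ _ _
  have hvre : v.re = 0 := toPure_re _ _ _
  have huvre : (u * v).re = 0 := by
    have hsym : (u * v).re = (v * u).re := by
      simp only [QuaternionAlgebra.re_mul]; ring
    have := congrArg QuaternionAlgebra.re hanti
    simp only [QuaternionAlgebra.re_add, QuaternionAlgebra.re_zero] at this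
    rw [← hsym] at this
    have h22 : (2:F) * (u*v).re = 0 := by linear_combination this
    rcases mul_eq_zero.1 h22 with h | h
    · exact absurd h h2
    · exact h
  have huuv : u * (u * v) = algebraMap F ℍ[F,a',b'] a * v := by
    rw [← mul_assoc, hu2]
  have hvuv : v * (u * v) = -(algebraMap F ℍ[F,a',b'] b * u) := by
    rw [← mul_assoc, hvu, neg_mul, mul_assoc, hv2, Algebra.commutes]
  -- injectivity
  have hinj : Function.Injective Φ := by
    rw [injective_iff_map_eq_zero]
    intro q hq
    have hlift : algebraMap F ℍ[F,a',b'] q.re + q.imI • u + q.imJ • v + q.imK • (u*v) = 0 := hq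
    -- re component gives q.re = 0
    have hre0 : q.re = 0 := by
      have := congrArg QuaternionAlgebra.re hlift
      simpa [QuaternionAlgebra.coe_algebraMap, hure, hvre, huvre] using this
    rw [hre0, map_zero, zero_add] at hlift
    -- multiply by u on the left
    have hI : q.imI = 0 := by
      have hmul := congrArg (fun z => (u * z).re) hlift
      simp only [mul_add, mul_smul_comm, mul_zero, QuaternionAlgebra.re_add,
        QuaternionAlgebra.re_smul, hu2, huuv, QuaternionAlgebra.re_zero] at hmul
      have hcoe_re : (algebraMap F ℍ[F,a',b'] a).re = a := rfl
      have huv_re : (algebraMap F ℍ[F,a',b'] a * v).re = a * v.re := by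
        rw [QuaternionAlgebra.coe_algebraMap]
        simp [QuaternionAlgebra.re_mul]
      rw [hcoe_re, huv_re, hvre, huvre] at hmul
      simp only [smul_eq_mul, mul_zero, add_zero] at hmul
      exact (mul_eq_zero.1 hmul).resolve_right ha
    rw [hI, zero_smul, zero_add] at hlift
    -- multiply by v on the left
    have hJ : q.imJ = 0 := by
      have hmul := congrArg (fun z => (v * z).re) hlift
      simp only [mul_add, mul_smul_comm, QuaternionAlgebra.re_add,
        QuaternionAlgebra.re_smul, hv2, hvuv, QuaternionAlgebra.re_zero] at hmul
      have hcoe_re : (algebraMap F ℍ[F,a',b'] b).re = b := rfl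
      have hbu_re : (-(algebraMap F ℍ[F,a',b'] b * u)).re = -(b * u.re) := by
        rw [QuaternionAlgebra.coe_algebraMap]
        simp [QuaternionAlgebra.re_mul]
      rw [hcoe_re, hbu_re, hure] at hmul
      simp only [smul_eq_mul, mul_zero, neg_zero, add_zero] at hmul
      exact (mul_eq_zero.1 hmul).resolve_right hb
    rw [hJ, zero_smul, zero_add] at hlift
    -- u*v ≠ 0
    have huvne : u * v ≠ 0 := by
      intro hz
      have hk2 : (u*v) * (u*v) = algebraMap F ℍ[F,a',b'] (-(a*b)) := by
        rw [mul_assoc, hvuv, mul_neg, Algebra.left_comm, hu2, ← map_mul,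
          ← map_neg (algebraMap F ℍ[F,a',b'])]
        congr 1
        ring
      rw [hz, zero_mul] at hk2
      have h0 : (0:F) = -(a*b) := algebraMap_injective_quat a' b' (by rw [map_zero]; exact hk2)
      exact mul_ne_zero ha hb (by linear_combination h0)
    have hK : q.imK = 0 := by
      rcases smul_eq_zero.1 hlift with h | h
      · exact h
      · exact absurd h huvne
    ext <;> simp [hre0, hI, hJ, hK]
  -- surjectivity by dimension count
  have hsurj : Function.Surjective Φ := by
    have hdim : Module.finrank F ℍ[F,a,b] = Module.finrank F ℍ[F,a',b'] := by
      rw [QuaternionAlgebra.finrank_eq_four, QuaternionAlgebra.finrank_eq_four]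
    exact (LinearMap.injective_iff_surjective_of_finrank_eq_finrank
      (f := Φ.toLinearMap) hdim).1 hinj
  exact ⟨AlgEquiv.ofBijective Φ ⟨hinj, hsurj⟩⟩

end WittAux

open QuadraticMap WittAux in
/-- Witt's theorem on conics and quaternion algebras: over a field `F` of characteristic
`≠ 2`, for nonzero `a, b, a', b' ∈ F`, the quaternion algebras `ℍ[F, a, b]` and
`ℍ[F, a', b']` are isomorphic as `F`-algebras (equivalently `(a,b) = (a',b')` in `Br F`)
if and only if the ternary quadratic forms `X² - aY² - bT²` and `X² - a'Y² - b'T²` are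
similar, i.e. the first is equivalent (isometric) to a nonzero scalar multiple of the
second; equivalently the conics `C_{a,b}` and `C_{a',b'}` in `ℙ²_F` are isomorphic. -/
theorem quaternion_iso_iff_conic_forms_similar (F : Type*) [Field F] (h2 : (2 : F) ≠ 0)
    (a b a' b' : F) (ha : a ≠ 0) (hb : b ≠ 0) (ha' : a' ≠ 0) (hb' : b' ≠ 0) :
    Nonempty (ℍ[F, a, b] ≃ₐ[F] ℍ[F, a', b']) ↔
      ∃ lam : F, lam ≠ 0 ∧
        (QuadraticMap.weightedSumSquares F ![1, -a, -b]).Equivalent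
          (lam • QuadraticMap.weightedSumSquares F ![1, -a', -b']) := by
  letI : Invertible (2 : F) := invertibleOfNonzero h2
  have hab : a * b ≠ 0 := mul_ne_zero ha hb
  have hab' : a' * b' ≠ 0 := mul_ne_zero ha' hb'
  have hbase := base_equiv_pure a b ha hb
  have hbase' := base_equiv_pure a' b' ha' hb'
  constructor
  · rintro ⟨φ⟩
    have hE := pure_equiv_of_iso h2 φ
    refine ⟨(a' * b') / (a * b), div_ne_zero hab' hab, ?_⟩
    have step1 : (weightedSumSquares F ![1, -a, -b]).Equivalent
        ((-(a*b)⁻¹) • weightedSumSquares F ![a', b', -(a'*b')]) :=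
      hbase.trans (equiv_smul _ hE)
    have step2 : (((a' * b') / (a * b)) • weightedSumSquares F ![1, -a', -b']).Equivalent
        ((-(a*b)⁻¹) • weightedSumSquares F ![a', b', -(a'*b')]) := by
      have h3 := equiv_smul ((a' * b') / (a * b)) hbase'
      rw [smul_smul, show (a' * b') / (a * b) * (-(a'*b')⁻¹) = -(a*b)⁻¹ by
        field_simp] at h3
      exact h3
    exact step1.trans step2.symm
  · rintro ⟨lam, hlam, h⟩
    -- discriminant bookkeeping
    obtain ⟨t, ht, hdet⟩ := discr_of_equiv h
    rw [wss_discr, QuadraticForm.discr'_smul, wss_discr] at hdet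
    have hprod : (∏ i, (![1, -a, -b] : Fin 3 → F) i) = a * b := by
      rw [Fin.prod_univ_three]; norm_num; change -(a * -b) = a * b; ring
    have hprod' : (∏ i, (![1, -a', -b'] : Fin 3 → F) i) = a' * b' := by
      rw [Fin.prod_univ_three]; norm_num; change -(a' * -b') = a' * b'; ring
    rw [hprod, hprod', show Fintype.card (Fin 3) = 3 from rfl] at hdet
    -- hdet : a * b = t * t * (lam ^ 3 * (a' * b'))
    have key : (weightedSumSquares F ![a, b, -(a*b)]).Equivalent
        (weightedSumSquares F ![a', b', -(a'*b')]) := by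
      have e0 : ((-(a*b)) • ((-(a*b)⁻¹) • weightedSumSquares F ![a, b, -(a*b)]))
          = weightedSumSquares F ![a, b, -(a*b)] := by
        rw [smul_smul, show (-(a*b)) * (-(a*b)⁻¹) = 1 by field_simp, one_smul]
      have e1 : (weightedSumSquares F ![a, b, -(a*b)]).Equivalent
          ((-(a*b)) • (lam • weightedSumSquares F ![1, -a', -b'])) := by
        rw [← e0]
        exact (equiv_smul (-(a*b)) hbase).symm.trans (equiv_smul (-(a*b)) h)
      have e2 : ((-(a*b)) • (lam • weightedSumSquares F ![1, -a', -b'])).Equivalent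
          ((((t * lam^2) * (t * lam^2))) • weightedSumSquares F ![a', b', -(a'*b')]) := by
        rw [smul_smul]
        have h4 := equiv_smul ((-(a*b)) * lam) hbase'
        rw [smul_smul, show (-(a*b)) * lam * (-(a'*b')⁻¹) = (t * lam^2) * (t * lam^2) by
          rw [hdet]; field_simp] at h4
        exact h4
      exact (e1.trans e2).trans (sq_smul_equiv _ (by
        exact mul_ne_zero ht (pow_ne_zero 2 hlam)))
    exact iso_of_pure_equiv h2 ha hb key
end

section
/- Let k be a field of characteristic ≠ 2, let n ≥ 1, and let Fₙ = k(x₁,…,xₙ) be the fraction field of the polynomial ring in n variables over k. Let a, b ∈ k be nonzero. If the quaternion algebra ℍ[Fₙ, a, b] (with a, b viewed in Fₙ via the inclusion k ⊂ Fₙ) is split, i.e., isomorphic as an Fₙ-algebra to the algebra of 2×2 matrices over Fₙ, then the quaternion algebra ℍ[k, a, b] is split over k, i.e., isomorphic as a k-algebra to the algebra of 2×2 matrices over k. (This is the injectivity part of the exact sequence 0 → Br(k)[2] → Br(k(𝔸ⁿ))[2] → ⊕ κ(x)×/κ(x)×², restricted to quaternion classes.) -/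
open scoped Quaternion
open MvPolynomial

open MvPolynomial

def Aniso (A : Type*) [CommRing A] (a b c : A) : Prop :=
  ∀ x y z : A, a * x ^ 2 + b * y ^ 2 + c * z ^ 2 = 0 → x = 0 ∧ y = 0 ∧ z = 0

theorem aniso_of_injective {A B : Type*} [CommRing A] [CommRing B] (f : A →+* B)
    (hf : Function.Injective f) {a b c : A} (h : Aniso B (f a) (f b) (f c)) :
    Aniso A a b c := by
  intro x y z hxyz
  have h0 : f a * f x ^ 2 + f b * f y ^ 2 + f c * f z ^ 2 = 0 := by
    rw [← map_pow, ← map_pow, ← map_pow, ← map_mul, ← map_mul, ← map_mul, ← map_add, ← map_add,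
      hxyz, map_zero]
  obtain ⟨h1, h2, h3⟩ := h (f x) (f y) (f z) h0
  exact ⟨hf (by rw [h1, map_zero]), hf (by rw [h2, map_zero]), hf (by rw [h3, map_zero])⟩

theorem aniso_polynomial {A : Type*} [CommRing A] [IsDomain A] {a b c : A}
    (h : Aniso A a b c) :
    Aniso (Polynomial A) (Polynomial.C a) (Polynomial.C b) (Polynomial.C c) := by
  intro p q r heq
  by_contra hne
  set d := max (max p.natDegree q.natDegree) r.natDegree with hd
  have key : ∀ f : Polynomial A, f.natDegree ≤ d → (f ^ 2).coeff (2 * d) = f.coeff d ^ 2 := by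
    intro f hf
    rcases eq_or_lt_of_le hf with hfd | hfd
    · rw [sq, two_mul, ← hfd, Polynomial.coeff_mul_degree_add_degree, sq]
      rfl
    · rw [Polynomial.coeff_eq_zero_of_natDegree_lt hfd, zero_pow two_ne_zero,
        Polynomial.coeff_eq_zero_of_natDegree_lt]
      calc (f ^ 2).natDegree ≤ 2 * f.natDegree := Polynomial.natDegree_pow_le
        _ < 2 * d := by omega
  have e : a * p.coeff d ^ 2 + b * q.coeff d ^ 2 + c * r.coeff d ^ 2 = 0 := by
    have hco := congrArg (fun f : Polynomial A => f.coeff (2 * d)) heq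
    simpa [Polynomial.coeff_C_mul, key p (by omega), key q (by omega), key r (by omega)]
      using hco
  obtain ⟨hp0, hq0, hr0⟩ := h _ _ _ e
  have hzero : ∀ f : Polynomial A, f.natDegree = d → f.coeff d = 0 → f = 0 := by
    intro f hfd hc
    have : f.leadingCoeff = 0 := by rw [Polynomial.leadingCoeff, hfd]; exact hc
    exact Polynomial.leadingCoeff_eq_zero.mp this
  rcases Nat.eq_zero_or_pos d with hd0 | hd0
  · exact hne ⟨hzero p (by omega) hp0, hzero q (by omega) hq0, hzero r (by omega) hr0⟩
  · have hc : d = p.natDegree ∨ d = q.natDegree ∨ d = r.natDegree := by omega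
    rcases hc with hh | hh | hh
    · have := hzero p hh.symm hp0; rw [this] at hh; simp at hh; omega
    · have := hzero q hh.symm hq0; rw [this] at hh; simp at hh; omega
    · have := hzero r hh.symm hr0; rw [this] at hh; simp at hh; omega

theorem aniso_mvPolynomial (k : Type*) [Field k] {a b c : k} (h : Aniso k a b c) (n : ℕ) :
    Aniso (MvPolynomial (Fin n) k) (C a) (C b) (C c) := by
  induction n with
  | zero =>
    refine aniso_of_injective (isEmptyAlgEquiv k (Fin 0) : MvPolynomial (Fin 0) k →+* k)
      (AlgEquiv.injective _) ?_
    have e : ∀ t : k, (isEmptyAlgEquiv k (Fin 0) : MvPolynomial (Fin 0) k →+* k) (C t) = t := by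
      intro t
      have h1 := (isEmptyAlgEquiv k (Fin 0)).apply_symm_apply t
      rw [isEmptyAlgEquiv_symm_apply] at h1
      exact h1
    rw [e, e, e]
    exact h
  | succ m ih =>
    have hC : ∀ x : k, (finSuccEquiv k m) (C x) = Polynomial.C (C x) := by
      intro x; simp [finSuccEquiv_apply]
    refine aniso_of_injective
      (finSuccEquiv k m : MvPolynomial (Fin (m + 1)) k →+* Polynomial (MvPolynomial (Fin m) k))
      (AlgEquiv.injective _) ?_
    simp only [RingHom.coe_coe, hC]
    exact aniso_polynomial ih

theorem aniso_fractionRing {A F : Type*} [CommRing A] [IsDomain A] [Field F] [Algebra A F]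
    [IsFractionRing A F] {a b c : A} (h : Aniso A a b c) :
    Aniso F (algebraMap A F a) (algebraMap A F b) (algebraMap A F c) := by
  intro x y z hxyz
  obtain ⟨px, dx, hdx, hx⟩ := IsFractionRing.div_surjective (A := A) x
  obtain ⟨py, dy, hdy, hy⟩ := IsFractionRing.div_surjective (A := A) y
  obtain ⟨pz, dz, hdz, hz⟩ := IsFractionRing.div_surjective (A := A) z
  have hdx0 : algebraMap A F dx ≠ 0 :=
    IsFractionRing.to_map_ne_zero_of_mem_nonZeroDivisors hdx
  have hdy0 : algebraMap A F dy ≠ 0 :=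
    IsFractionRing.to_map_ne_zero_of_mem_nonZeroDivisors hdy
  have hdz0 : algebraMap A F dz ≠ 0 :=
    IsFractionRing.to_map_ne_zero_of_mem_nonZeroDivisors hdz
  have hx' : algebraMap A F px = x * algebraMap A F dx := by
    rw [← hx]; field_simp
  have hy' : algebraMap A F py = y * algebraMap A F dy := by
    rw [← hy]; field_simp
  have hz' : algebraMap A F pz = z * algebraMap A F dz := by
    rw [← hz]; field_simp
  have key : a * (px * dy * dz) ^ 2 + b * (py * dx * dz) ^ 2 + c * (pz * dx * dy) ^ 2 = 0 := by
    apply IsFractionRing.injective A F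
    rw [map_zero]
    push_cast [map_add, map_mul, map_pow]
    rw [hx', hy', hz']
    linear_combination (algebraMap A F dx * algebraMap A F dy * algebraMap A F dz) ^ 2 * hxyz
  obtain ⟨h1, h2, h3⟩ := h _ _ _ key
  have hdx0' : dx ≠ 0 := fun h => hdx0 (by rw [h, map_zero])
  have hdy0' : dy ≠ 0 := fun h => hdy0 (by rw [h, map_zero])
  have hdz0' : dz ≠ 0 := fun h => hdz0 (by rw [h, map_zero])
  have hpx : px = 0 := by
    rcases mul_eq_zero.mp h1 with h' | h'
    · rcases mul_eq_zero.mp h' with h'' | h''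
      · exact h''
      · exact absurd h'' hdy0'
    · exact absurd h' hdz0'
  refine ⟨?_, ?_, ?_⟩
  · rw [← hx, hpx, map_zero, zero_div]
  · have hpy : py = 0 := by
      rcases mul_eq_zero.mp h2 with h' | h'
      · rcases mul_eq_zero.mp h' with h'' | h''
        · exact h''
        · exact absurd h'' hdx0'
      · exact absurd h' hdz0'
    rw [← hy, hpy, map_zero, zero_div]
  · have hpz : pz = 0 := by
      rcases mul_eq_zero.mp h3 with h' | h'
      · rcases mul_eq_zero.mp h' with h'' | h''
        · exact h''
        · exact absurd h'' hdx0'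
      · exact absurd h' hdy0'
    rw [← hz, hpz, map_zero, zero_div]



theorem quat_split_of_rep {k : Type*} [Field k] (h2 : (2 : k) ≠ 0) {a b p s : k}
    (ha : a ≠ 0) (hb : b ≠ 0) (hps : p ^ 2 - b * s ^ 2 = a) :
    Nonempty (ℍ[k, a, b] ≃ₐ[k] Matrix (Fin 2) (Fin 2) k) := by
  set I : Matrix (Fin 2) (Fin 2) k := !![p, -(b * s); s, -p] with hIdef
  set J : Matrix (Fin 2) (Fin 2) k := !![0, b; 1, 0] with hJdef
  have hI : I * I = a • (1 : Matrix (Fin 2) (Fin 2) k) := by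
    ext i j
    fin_cases i <;> fin_cases j <;>
      simp [hIdef, Matrix.mul_apply, Fin.sum_univ_two, Matrix.one_apply] <;> first | linear_combination hps | linear_combination -hps | ring_nf
  have hJ : J * J = b • (1 : Matrix (Fin 2) (Fin 2) k) := by
    ext i j
    fin_cases i <;> fin_cases j <;>
      simp [hJdef, Matrix.mul_apply, Fin.sum_univ_two, Matrix.one_apply]
  have hJI : J * I = -(I * J) := by
    ext i j
    fin_cases i <;> fin_cases j <;>
      simp [hIdef, hJdef, Matrix.mul_apply, Fin.sum_univ_two] <;> ring
  let Q : QuaternionAlgebra.Basis (Matrix (Fin 2) (Fin 2) k) a 0 b :=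
    ⟨I, J, I * J, by rw [hI]; simp, hJ, rfl, by rw [hJI]; simp⟩
  have hinj : Function.Injective Q.liftHom := by
    rw [injective_iff_map_eq_zero]
    rintro ⟨w, x, y, z⟩ hq
    have hq' := Matrix.ext_iff.mpr hq
    have e00 := hq' 0 0
    have e01 := hq' 0 1
    have e10 := hq' 1 0
    have e11 := hq' 1 1
    simp [QuaternionAlgebra.Basis.liftHom_apply, QuaternionAlgebra.Basis.lift, Q, hIdef, hJdef,
      Matrix.mul_apply, Fin.sum_univ_two, Matrix.algebraMap_matrix_apply] at e00 e01 e10 e11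
    -- e00 : w + x*p + z * ... = 0 etc
    have hw : w = 0 := by
      have : 2 * w = 0 := by linear_combination e00 + e11
      exact (mul_eq_zero.mp this).resolve_left h2
    have hy : y = 0 := by
      have hB : b * (-(x * s) + y + z * p) = 0 := by linear_combination e01
      have h1 : -(x * s) + y + z * p = 0 := (mul_eq_zero.mp hB).resolve_left hb
      have : 2 * y = 0 := by linear_combination h1 + e10 - hw * s * 0
      exact (mul_eq_zero.mp this).resolve_left h2
    have h00' : x * p = z * (b * s) := by linear_combination e00 - hw
    have h10' : x * s = z * p := by linear_combination e10 - hy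
    have hz : z = 0 := by
      have hza : z * a = 0 := by
        linear_combination s * h00' - p * h10' - z * hps
      exact (mul_eq_zero.mp hza).resolve_right ha
    have hx : x = 0 := by
      rw [hz] at h00' h10'
      simp only [zero_mul] at h00' h10'
      have hxa : x ^ 2 * a = 0 := by
        linear_combination -x ^ 2 * hps + x * p * h00' - b * x * s * h10'
      have := (mul_eq_zero.mp hxa).resolve_right ha
      exact pow_eq_zero_iff two_ne_zero |>.mp this
    ext <;> simp [hw, hx, hy, hz]
  have hfr : Module.finrank k ℍ[k, a, b] = Module.finrank k (Matrix (Fin 2) (Fin 2) k) := by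
    rw [QuaternionAlgebra.finrank_eq_four]
    simp [Module.finrank_matrix]
  have hsurj : Function.Surjective Q.liftHom :=
    (LinearMap.injective_iff_surjective_of_finrank_eq_finrank (f := Q.liftHom.toLinearMap)
      hfr).mp hinj
  exact ⟨AlgEquiv.ofBijective Q.liftHom ⟨hinj, hsurj⟩⟩


set_option maxHeartbeats 1000000 in
set_option synthInstance.maxHeartbeats 100000 in
/-- Injectivity of `Br(k) → Br(k(x₁,…,xₙ))` on quaternion classes: let `k` be a field of
characteristic `≠ 2`, `n ≥ 1`, and `Fₙ = k(x₁,…,xₙ)` the fraction field of the polynomial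
ring in `n` variables. For nonzero `a, b ∈ k`, if the quaternion algebra `ℍ[Fₙ, a, b]`
is split (isomorphic as an `Fₙ`-algebra to the `2×2` matrix algebra over `Fₙ`), then
`ℍ[k, a, b]` is split over `k`. -/
theorem quaternion_split_of_split_over_ratFunc (k : Type*) [Field k] (h2 : (2 : k) ≠ 0)
    (n : ℕ) (hn : 1 ≤ n) (a b : k) (ha : a ≠ 0) (hb : b ≠ 0)
    (hsplit : Nonempty
      (ℍ[FractionRing (MvPolynomial (Fin n) k),
          algebraMap k (FractionRing (MvPolynomial (Fin n) k)) a,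
          algebraMap k (FractionRing (MvPolynomial (Fin n) k)) b]
        ≃ₐ[FractionRing (MvPolynomial (Fin n) k)]
        Matrix (Fin 2) (Fin 2) (FractionRing (MvPolynomial (Fin n) k)))) :
    Nonempty (ℍ[k, a, b] ≃ₐ[k] Matrix (Fin 2) (Fin 2) k) := by
  obtain ⟨e⟩ := hsplit
  set F := FractionRing (MvPolynomial (Fin n) k) with hF
  set A := algebraMap k F a with hA
  set B := algebraMap k F b with hB
  have h2F : (2 : F) ≠ 0 := fun h =>
    h2 ((algebraMap k F).injective (by rw [map_ofNat, map_zero, h]))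
  have hM : (!![0, 1; 0, 0] : Matrix (Fin 2) (Fin 2) F) * !![0, 1; 0, 0] = 0 := by
    ext i j
    fin_cases i <;> fin_cases j <;> simp [Matrix.mul_apply, Fin.sum_univ_two]
  set m := e.symm !![0, 1; 0, 0] with hm
  have hm0 : m ≠ 0 := by
    intro h0
    have hmat : (!![0, 1; 0, 0] : Matrix (Fin 2) (Fin 2) F) = 0 := by
      have h1 := congrArg e h0
      rw [hm, AlgEquiv.apply_symm_apply, map_zero] at h1
      exact h1
    have h01 := Matrix.ext_iff.mpr hmat 0 1
    simpa using h01
  have hmm : m * m = 0 := by rw [hm, ← map_mul, hM, map_zero]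
  have hre := congrArg QuaternionAlgebra.re hmm
  have hi := congrArg QuaternionAlgebra.imI hmm
  have hj := congrArg QuaternionAlgebra.imJ hmm
  have hk := congrArg QuaternionAlgebra.imK hmm
  simp only [QuaternionAlgebra.re_mul, QuaternionAlgebra.imI_mul, QuaternionAlgebra.imJ_mul,
    QuaternionAlgebra.imK_mul, QuaternionAlgebra.re_zero, QuaternionAlgebra.imI_zero,
    QuaternionAlgebra.imJ_zero, QuaternionAlgebra.imK_zero, zero_mul, mul_zero, add_zero,
    zero_add] at hre hi hj hk
  set w := m.re with hwdef
  set x := m.imI with hxdef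
  set y := m.imJ with hydef
  set z := m.imK with hzdef
  have hnot : ¬(x = 0 ∧ y = 0 ∧ z = 0) := by
    rintro ⟨hx, hy, hz⟩
    apply hm0
    have hww : w * w = 0 := by
      rw [hx, hy, hz] at hre
      linear_combination hre
    have hw : w = 0 := mul_self_eq_zero.mp hww
    ext
    · exact hw
    · exact hx
    · exact hy
    · exact hz
  have hw : w = 0 := by
    by_contra hw0
    apply hnot
    refine ⟨?_, ?_, ?_⟩
    · have h' : 2 * (w * x) = 0 := by linear_combination hi
      rcases mul_eq_zero.mp h' with h'' | h''
      · exact absurd h'' h2F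
      · exact (mul_eq_zero.mp h'').resolve_left hw0
    · have h' : 2 * (w * y) = 0 := by linear_combination hj
      rcases mul_eq_zero.mp h' with h'' | h''
      · exact absurd h'' h2F
      · exact (mul_eq_zero.mp h'').resolve_left hw0
    · have h' : 2 * (w * z) = 0 := by linear_combination hk
      rcases mul_eq_zero.mp h' with h'' | h''
      · exact absurd h'' h2F
      · exact (mul_eq_zero.mp h'').resolve_left hw0
  have heqn : A * x ^ 2 + B * y ^ 2 + -(A * B) * z ^ 2 = 0 := by
    linear_combination hre - w * hw
  have hsol : ∃ X Y Z : k,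
      (a * X ^ 2 + b * Y ^ 2 + -(a * b) * Z ^ 2 = 0) ∧ ¬(X = 0 ∧ Y = 0 ∧ Z = 0) := by
    by_contra hcon
    push_neg at hcon
    have hAn : Aniso k a b (-(a * b)) := fun X Y Z hXYZ => hcon X Y Z hXYZ
    have hMv := aniso_mvPolynomial k hAn n
    have hFr := aniso_fractionRing (F := F) hMv
    have emap : ∀ t : k, algebraMap (MvPolynomial (Fin n) k) F (C t) = algebraMap k F t := by
      intro t; rw [← MvPolynomial.algebraMap_eq, ← IsScalarTower.algebraMap_apply]
    rw [emap, emap, emap, map_neg, map_mul] at hFr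
    exact hnot (hFr x y z heqn)
  obtain ⟨X, Y, Z, heqk, hnek⟩ := hsol
  have hps : ∃ p s : k, p ^ 2 - b * s ^ 2 = a := by
    by_cases hD : X ^ 2 - b * Z ^ 2 = 0
    · by_cases hZ : Z = 0
      · exfalso
        have hX : X = 0 := by
          have hX2 : X ^ 2 = 0 := by linear_combination hD + b * Z * hZ
          exact pow_eq_zero_iff two_ne_zero |>.mp hX2
        have hY : Y = 0 := by
          have hbY : b * Y ^ 2 = 0 := by linear_combination heqk - a * X * hX + a * b * Z * hZ
          have := (mul_eq_zero.mp hbY).resolve_left hb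
          exact pow_eq_zero_iff two_ne_zero |>.mp this
        exact hnek ⟨hX, hY, hZ⟩
      · have hX0 : X ≠ 0 := by
          intro h0
          have hbZ : b * Z ^ 2 = 0 := by linear_combination X * h0 - hD
          rcases mul_eq_zero.mp hbZ with h'' | h''
          · exact hb h''
          · exact hZ (pow_eq_zero_iff two_ne_zero |>.mp h'')
        have hbeq : b * Z ^ 2 = X ^ 2 := by linear_combination -hD
        refine ⟨(a + 1) / 2, (a - 1) * Z / (2 * X), ?_⟩
        field_simp
        linear_combination (-1 : k) * (a - 1) ^ 2 * hbeq
    · refine ⟨b * Y * Z / (X ^ 2 - b * Z ^ 2), X * Y / (X ^ 2 - b * Z ^ 2), ?_⟩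
      field_simp
      linear_combination -(X ^ 2 - b * Z ^ 2) * heqk
  obtain ⟨p, s, hps'⟩ := hps
  exact quat_split_of_rep h2 ha hb hps'
end

section
/- Let k be a field of characteristic ≠ 2 containing an element i with i² = −1, and let k(u) be the field of rational functions in one variable u over k. Then the quaternion algebra ℍ[k(u), −(u+1)(u−2), (u−2)(1−2u)] is split, i.e., isomorphic as a k(u)-algebra to the algebra of 2×2 matrices over k(u). (In the paper this is the class γ, which lies in the Brauer group of the local ring of the line D: v = 1−u at the point u = 0, v = 1, evaluates there to (2,−2) = 0, and is therefore trivial.) -/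
open scoped Quaternion

theorem split_of_norm {F : Type*} [Field F] (h2 : (2 : F) ≠ 0)
    (a b x y : F) (ha : a ≠ 0) (hb : b ≠ 0) (hy : y ≠ 0)
    (hxy : x ^ 2 - a * y ^ 2 = b) :
    Nonempty (ℍ[F, a, b] ≃ₐ[F] Matrix (Fin 2) (Fin 2) F) := by
  let I : Matrix (Fin 2) (Fin 2) F := !![0, a; 1, 0]
  let J : Matrix (Fin 2) (Fin 2) F := !![x, -(a*y); y, -x]
  let basis : QuaternionAlgebra.Basis (Matrix (Fin 2) (Fin 2) F) a 0 b :=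
    { i := I
      j := J
      k := I * J
      i_mul_i := by
        ext r c
        fin_cases r <;> fin_cases c <;>
          simp [I, Matrix.mul_apply, Fin.sum_univ_two, Matrix.one_apply]
      j_mul_j := by
        rw [← hxy]
        ext r c
        fin_cases r <;> fin_cases c <;>
          simp [J, Matrix.mul_apply, Fin.sum_univ_two, Matrix.one_apply] <;> ring
      i_mul_j := rfl
      j_mul_i := by
        ext r c
        fin_cases r <;> fin_cases c <;>
          simp [I, J, Matrix.mul_apply, Fin.sum_univ_two] <;> ring }
  let f := basis.liftHom
  have hinj : Function.Injective f := by
    rw [injective_iff_map_eq_zero]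
    intro q hq
    have e00 := congrFun (congrFun hq 0) 0
    have e01 := congrFun (congrFun hq 0) 1
    have e10 := congrFun (congrFun hq 1) 0
    have e11 := congrFun (congrFun hq 1) 1
    simp [f, basis, QuaternionAlgebra.Basis.liftHom, QuaternionAlgebra.Basis.lift, I, J,
      Matrix.mul_apply, Fin.sum_univ_two, Matrix.algebraMap_eq_diagonal,
      Matrix.diagonal, Matrix.vecHead, Matrix.vecTail, Function.comp] at e00 e01 e10 e11
    have hre : q.re = 0 := by
      have h : q.re * 2 = 0 := by linear_combination e00 + e11
      rcases mul_eq_zero.mp h with h | h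
      · exact h
      · exact absurd h h2
    have hI : q.imI = 0 := by
      have h : q.imI * (2 * a) = 0 := by linear_combination e01 + a * e10
      rcases mul_eq_zero.mp h with h | h
      · exact h
      · exact absurd h (mul_ne_zero h2 ha)
    have hK : q.imK = 0 := by
      have h : q.imK * b = 0 := by
        linear_combination x * e10 - y * e00 - q.imK * hxy + y * hre - x * hI
      rcases mul_eq_zero.mp h with h | h
      · exact h
      · exact absurd h hb
    have hJ : q.imJ = 0 := by
      have h : q.imJ * y = 0 := by linear_combination e10 - x * hK - hI
      rcases mul_eq_zero.mp h with h | h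
      · exact h
      · exact absurd h hy
    ext <;> simp [hre, hI, hJ, hK]
  have hdim : Module.finrank F ℍ[F, a, b] = Module.finrank F (Matrix (Fin 2) (Fin 2) F) := by
    rw [QuaternionAlgebra.finrank_eq_four, Module.finrank_matrix]
    simp
  have hsurj : Function.Surjective f :=
    (LinearMap.injective_iff_surjective_of_finrank_eq_finrank
      (f := f.toLinearMap) hdim).mp hinj
  exact ⟨AlgEquiv.ofBijective f ⟨hinj, hsurj⟩⟩

/-- For a field `k` of characteristic `≠ 2` containing a square root of `-1`,
the quaternion algebra `ℍ[k(u), -(u+1)(u-2), (u-2)(1-2u)]` over the rational function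
field `k(u)` is split, i.e. isomorphic as a `k(u)`-algebra to the `2×2` matrix algebra. -/
theorem quaternion_gamma_split (k : Type*) [Field k] (h2 : (2 : k) ≠ 0)
    (i : k) (hi : i ^ 2 = -1) :
    Nonempty (ℍ[RatFunc k, -((RatFunc.X + 1) * (RatFunc.X - 2)),
        (RatFunc.X - 2) * (1 - 2 * RatFunc.X)] ≃ₐ[RatFunc k]
      Matrix (Fin 2) (Fin 2) (RatFunc k)) := by
  have h2C : (2 : RatFunc k) = RatFunc.C 2 := (map_ofNat RatFunc.C 2).symm
  have hX2 : (RatFunc.X - 2 : RatFunc k) ≠ 0 := by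
    have : (RatFunc.X - 2 : RatFunc k) =
        algebraMap (Polynomial k) _ (Polynomial.X - Polynomial.C 2) := by
      simp [map_sub, RatFunc.algebraMap_X, RatFunc.algebraMap_C, h2C]
    rw [this]
    exact RatFunc.algebraMap_ne_zero (Polynomial.X_sub_C_ne_zero 2)
  have hX1 : (RatFunc.X + 1 : RatFunc k) ≠ 0 := by
    have : (RatFunc.X + 1 : RatFunc k) =
        algebraMap (Polynomial k) _ (Polynomial.X - Polynomial.C (-1)) := by
      simp [map_sub, RatFunc.algebraMap_X, RatFunc.algebraMap_C]
    rw [this]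
    exact RatFunc.algebraMap_ne_zero (Polynomial.X_sub_C_ne_zero (-1))
  have h2F : (2 : RatFunc k) ≠ 0 := by
    rw [show (2 : RatFunc k) = algebraMap k (RatFunc k) 2 from (map_ofNat _ 2).symm]
    exact (map_ne_zero _).mpr h2
  have h12X : (1 - 2 * RatFunc.X : RatFunc k) ≠ 0 := by
    have : (1 - 2 * RatFunc.X : RatFunc k) =
        algebraMap (Polynomial k) _ (1 - Polynomial.C 2 * Polynomial.X) := by
      simp [map_sub, map_mul, RatFunc.algebraMap_X, RatFunc.algebraMap_C, h2C]
    rw [this]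
    refine RatFunc.algebraMap_ne_zero ?_
    intro h
    have h1 := congrArg (fun p => Polynomial.coeff p 1) h
    simp [Polynomial.coeff_one] at h1
    exact h2 h1
  set ii : RatFunc k := algebraMap k (RatFunc k) i with hii_def
  have hii : ii ^ 2 = -1 := by rw [hii_def, ← map_pow, hi, map_neg, map_one]
  have hy : ii ≠ 0 := by
    intro h
    rw [h] at hii
    simp at hii
  refine split_of_norm h2F _ _ (ii * (RatFunc.X - 2)) ii ?_ ?_ hy ?_
  · exact neg_ne_zero.mpr (mul_ne_zero hX1 hX2)
  · exact mul_ne_zero hX2 h12X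
  · linear_combination ((RatFunc.X - 2 : RatFunc k) ^ 2
      + (RatFunc.X + 1) * (RatFunc.X - 2)) * hii
end

section
/- Let k be a field of characteristic ≠ 2 containing an element i with i² = −1, and let k(u) be the field of rational functions in one variable u over k. Then the quaternion algebra ℍ[k(u), u(1−u)(u²−1)(u²−2u), u(u²−2u)(1−2u)] is split, i.e., isomorphic as a k(u)-algebra to the algebra of 2×2 matrices over k(u). (This is the restriction of the class α = (uv(u²−1)(v²−1), u(v²−1)(v²−u²)) ∈ Br(k(u,v)) to the generic point of the line D of equation v = 1−u, and its vanishing is the key step showing α = (u,v).) -/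
open scoped Quaternion
open Matrix

/-- If `a = c^2 * A` and `b = d^2 * (p^2 - A)` with all relevant quantities nonzero,
then `ℍ[F, a, b]` is split. -/
lemma quat_split_aux {F : Type*} [Field F] (h2 : (2 : F) ≠ 0) (a b A p c d : F)
    (hA : A ≠ 0) (hc : c ≠ 0) (hd : d ≠ 0) (hB : p ^ 2 - A ≠ 0)
    (ha : a = c ^ 2 * A) (hb : b = d ^ 2 * (p ^ 2 - A)) :
    Nonempty (ℍ[F, a, b] ≃ₐ[F] Matrix (Fin 2) (Fin 2) F) := by
  set I : Matrix (Fin 2) (Fin 2) F := !![0, A; 1, 0] with hI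
  set J : Matrix (Fin 2) (Fin 2) F := !![p, -A; 1, -p] with hJ
  have hII : (c • I) * (c • I) = a • (1 : Matrix (Fin 2) (Fin 2) F) := by
    ext x y
    fin_cases x <;> fin_cases y <;>
      simp [hI, Matrix.mul_apply, Fin.sum_univ_two, Matrix.one_apply, ha] <;> ring
  have hJJ : (d • J) * (d • J) = b • (1 : Matrix (Fin 2) (Fin 2) F) := by
    ext x y
    fin_cases x <;> fin_cases y <;>
      simp [hJ, Matrix.mul_apply, Fin.sum_univ_two, Matrix.one_apply, hb] <;> ring
  have hJI : (d • J) * (c • I) = -((c • I) * (d • J)) := by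
    ext x y
    fin_cases x <;> fin_cases y <;>
      simp [hI, hJ, Matrix.mul_apply, Fin.sum_univ_two] <;> ring
  let q : QuaternionAlgebra.Basis (Matrix (Fin 2) (Fin 2) F) a 0 b :=
    { i := c • I, j := d • J, k := (c • I) * (d • J),
      i_mul_i := by simpa using hII, j_mul_j := hJJ, i_mul_j := rfl,
      j_mul_i := by simpa [sub_eq_add_neg] using hJI }
  let φ := q.liftHom
  have hinj : Function.Injective φ := by
    rw [injective_iff_map_eq_zero]
    intro x hx
    have hfx : q.lift x = 0 := hx
    rw [QuaternionAlgebra.Basis.lift] at hfx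
    have E : ∀ u v : Fin 2,
        (algebraMap F (Matrix (Fin 2) (Fin 2) F) x.re) u v + (x.imI • (c • I)) u v
          + (x.imJ • (d • J)) u v + (x.imK • ((c • I) * (d • J))) u v = 0 := by
      intro u v
      have := congrFun (congrFun hfx u) v
      simpa [q] using this
    have E00 := E 0 0
    have E01 := E 0 1
    have E10 := E 1 0
    have E11 := E 1 1
    simp [hI, hJ, Matrix.mul_apply, Fin.sum_univ_two, Matrix.algebraMap_matrix_apply] at E00 E01 E10 E11
    have hxI : x.imI = 0 := by
      have h : x.imI * (2 * c * A) = 0 := by linear_combination E01 + A * E10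
      rcases mul_eq_zero.mp h with h | h
      · exact h
      · exact absurd h (by
          intro hh
          rcases mul_eq_zero.mp hh with hh | hh
          · exact (mul_ne_zero h2 hc) hh
          · exact hA hh)
    have hre : x.re = 0 := by
      have h : x.re * 2 = 0 := by linear_combination E00 + E11
      exact (mul_eq_zero.mp h).resolve_right h2
    have hxK : x.imK = 0 := by
      have h : x.imK * (2 * (c * d * (p ^ 2 - A))) = 0 := by
        linear_combination 2 * p * E10 - E00 + E11 - 2 * p * c * hxI
      rcases mul_eq_zero.mp h with h | h
      · exact h
      · exact absurd h (mul_ne_zero h2 (mul_ne_zero (mul_ne_zero hc hd) hB))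
    have hxJ : x.imJ = 0 := by
      have h : x.imJ * d = 0 := by linear_combination E10 - c * hxI - c * d * p * hxK
      exact (mul_eq_zero.mp h).resolve_right hd
    ext <;> assumption
  have hsurj : Function.Surjective φ := by
    have hfr : Module.finrank F ℍ[F, a, b] = Module.finrank F (Matrix (Fin 2) (Fin 2) F) := by
      rw [QuaternionAlgebra.finrank_eq_four, Module.finrank_matrix]
      simp
    exact (LinearMap.injective_iff_surjective_of_finrank_eq_finrank
      (f := φ.toLinearMap) hfr).mp hinj
  exact ⟨AlgEquiv.ofBijective φ ⟨hinj, hsurj⟩⟩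

/-- For a field `k` of characteristic `≠ 2` containing a square root of `-1`,
the quaternion algebra `ℍ[k(u), u(1-u)(u²-1)(u²-2u), u(u²-2u)(1-2u)]` over the rational
function field `k(u)` is split, i.e. isomorphic as a `k(u)`-algebra to the `2×2`
matrix algebra over `k(u)`. -/
theorem quaternion_alpha_restricted_split (k : Type*) [Field k] (h2 : (2 : k) ≠ 0)
    (i : k) (hi : i ^ 2 = -1) :
    Nonempty (ℍ[RatFunc k,
        RatFunc.X * (1 - RatFunc.X) * (RatFunc.X ^ 2 - 1) * (RatFunc.X ^ 2 - 2 * RatFunc.X),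
        RatFunc.X * (RatFunc.X ^ 2 - 2 * RatFunc.X) * (1 - 2 * RatFunc.X)] ≃ₐ[RatFunc k]
      Matrix (Fin 2) (Fin 2) (RatFunc k)) := by
  set X : RatFunc k := RatFunc.X with hXdef
  set j : RatFunc k := algebraMap k (RatFunc k) i with hjdef
  have hj2 : j ^ 2 = -1 := by
    rw [hjdef, ← map_pow, hi]
    simp
  have hi0 : i ≠ 0 := by
    intro h
    rw [h] at hi
    apply h2
    linear_combination 2 * hi
  have hj : j ≠ 0 := by
    rw [hjdef, map_ne_zero]
    exact hi0
  have h2' : (2 : RatFunc k) ≠ 0 := by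
    rw [show (2 : RatFunc k) = algebraMap k (RatFunc k) 2 from (map_ofNat _ 2).symm, map_ne_zero]
    exact h2
  have hC2 : (RatFunc.C (2 : k)) = (2 : RatFunc k) := map_ofNat _ 2
  have hpoly : ∀ P : Polynomial k, P ≠ 0 → algebraMap (Polynomial k) (RatFunc k) P ≠ 0 :=
    fun P hP => RatFunc.algebraMap_ne_zero hP
  have hX0 : X ≠ 0 := RatFunc.X_ne_zero
  have hX1 : 1 - X ≠ 0 := by
    have := hpoly (1 - Polynomial.X) (by
      intro h
      apply Polynomial.X_sub_C_ne_zero (R := k) 1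
      rw [Polynomial.C_1]
      linear_combination -h)
    simpa using this
  have hXp1 : X + 1 ≠ 0 := by
    have := hpoly (Polynomial.X + Polynomial.C 1) (Polynomial.X_add_C_ne_zero 1)
    simpa using this
  have hXm2 : X - 2 ≠ 0 := by
    have := hpoly (Polynomial.X - Polynomial.C 2) (Polynomial.X_sub_C_ne_zero 2)
    simpa [hC2] using this
  have h12X : 1 - 2 * X ≠ 0 := by
    have := hpoly (1 - Polynomial.C 2 * Polynomial.X) (by
      intro h
      have hc : ((1 : Polynomial k) - Polynomial.C 2 * Polynomial.X).coeff 1 = 0 := by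
        rw [h]; simp
      simp [Polynomial.coeff_one] at hc
      exact h2 hc)
    simpa [hC2] using this
  exact quat_split_aux h2'
    (X * (1 - X) * (X ^ 2 - 1) * (X ^ 2 - 2 * X))
    (X * (X ^ 2 - 2 * X) * (1 - 2 * X))
    ((X + 1) * (X - 2)) (j * (X - 2)) (j * (X * (1 - X))) X
    (mul_ne_zero hXp1 hXm2)
    (mul_ne_zero hj (mul_ne_zero hX0 hX1))
    hX0
    (by
      have h : (j * (X - 2)) ^ 2 - (X + 1) * (X - 2) = (X - 2) * (1 - 2 * X) := by
        linear_combination (X - 2) ^ 2 * hj2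
      rw [h]
      exact mul_ne_zero hXm2 h12X)
    (by linear_combination (-(X ^ 2 * (1 - X) ^ 2 * (X + 1) * (X - 2))) * hj2)
    (by linear_combination (-(X ^ 2 * (X - 2) ^ 2)) * hj2)
end
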